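/- Let ρ and σ be density operators on a finite-dimensional Hilbert space with supp(ρ) ⊆ supp(σ). Then the quantum relative entropy dominates the squared purified distance: D(ρ‖σ) ≥ P(ρ,σ)² = 1 − F(ρ,σ)², where F(ρ,σ) = ‖√ρ√σ‖₁ is the fidelity. -/

import Mathlib

open Matrix
open scoped ComplexOrder

/-- Functional calculus for Hermitian matrices via the spectral theorem
(junk value `0` for non-Hermitian input). -/
noncomputable def matFun {n : ℕ} (f : ℝ → ℝ) (A : Matrix (Fin n) (Fin n) ℂ) :
    Matrix (Fin n) (Fin n) ℂ :=
  if h : A.IsHermitian then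
    (h.eigenvectorUnitary : Matrix (Fin n) (Fin n) ℂ) *
      diagonal (fun i => (f (h.eigenvalues i) : ℂ)) *
      (star (h.eigenvectorUnitary : Matrix (Fin n) (Fin n) ℂ))
  else 0

/-- Base-2 matrix logarithm on the support (`log₂ 0 := 0` on the kernel). -/
noncomputable def matLog {n : ℕ} (A : Matrix (Fin n) (Fin n) ℂ) :
    Matrix (Fin n) (Fin n) ℂ :=
  matFun (Real.logb 2) A

/-- Square root of a positive semidefinite matrix, as `Matrix.PosSemidef.sqrt` was defined in
Mathlib (Dec 2024) before its removal. -/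
noncomputable def Matrix.PosSemidef.sqrt {m : Type*} [Fintype m] [DecidableEq m] {𝕜 : Type*}
    [RCLike 𝕜] {A : Matrix m m 𝕜} (hA : A.PosSemidef) : Matrix m m 𝕜 :=
  (hA.1.eigenvectorUnitary : Matrix m m 𝕜) * diagonal ((↑) ∘ Real.sqrt ∘ hA.1.eigenvalues) *
    (star (hA.1.eigenvectorUnitary : Matrix m m 𝕜))

/-- The trace norm `‖X‖₁ = tr √(XᴴX)`. -/
noncomputable def traceNorm {n : ℕ} (X : Matrix (Fin n) (Fin n) ℂ) : ℝ :=
  (Matrix.PosSemidef.sqrt (Matrix.posSemidef_conjTranspose_mul_self X)).trace.re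

/-- The fidelity `F(ρ,σ) = ‖√ρ √σ‖₁` between positive semidefinite matrices. -/
noncomputable def fidelity {n : ℕ} {ρ σ : Matrix (Fin n) (Fin n) ℂ}
    (hρ : ρ.PosSemidef) (hσ : σ.PosSemidef) : ℝ :=
  traceNorm (Matrix.PosSemidef.sqrt hρ * Matrix.PosSemidef.sqrt hσ)

/-! ### Auxiliary lemmas -/

lemma trace_core {n : ℕ} (U V : Matrix (Fin n) (Fin n) ℂ) (a b : Fin n → ℝ) :
    ((U * diagonal (fun i => (a i : ℂ)) * star U) *
      (V * diagonal (fun j => (b j : ℂ)) * star V)).trace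
    = ((∑ i, ∑ j, a i * b j * ‖(star U * V) i j‖ ^ 2 : ℝ) : ℂ) := by
  set W : Matrix (Fin n) (Fin n) ℂ := star U * V with hW
  have hmat : (U * diagonal (fun i => (a i : ℂ)) * star U) *
      (V * diagonal (fun j => (b j : ℂ)) * star V)
      = U * (diagonal (fun i => (a i : ℂ)) * (W * (diagonal (fun j => (b j : ℂ)) * star V))) := by
    simp only [hW, Matrix.mul_assoc]
  rw [hmat, Matrix.trace_mul_comm]
  have hVU : star V * U = star W := by rw [hW, Matrix.star_mul, star_star]
  have hmat2 : diagonal (fun i => (a i : ℂ)) * (W * (diagonal (fun j => (b j : ℂ)) * star V)) * U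
      = diagonal (fun i => (a i : ℂ)) * (W * (diagonal (fun j => (b j : ℂ)) * star W)) := by
    simp only [Matrix.mul_assoc, hVU]
  rw [hmat2, Matrix.trace]
  push_cast
  apply Finset.sum_congr rfl
  intro i _
  rw [Matrix.diag_apply, Matrix.diagonal_mul, Matrix.mul_apply, Finset.mul_sum]
  apply Finset.sum_congr rfl
  intro j _
  rw [Matrix.diagonal_mul, Matrix.star_apply]
  trans (a i : ℂ) * (b j : ℂ) * (W i j * (starRingEnd ℂ) (W i j))
  · rw [Complex.star_def]; ring
  · rw [Complex.mul_conj']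

lemma re_trace_le_traceNorm {n : ℕ} (Y : Matrix (Fin n) (Fin n) ℂ) :
    Y.trace.re ≤ traceNorm Y := by
  classical
  set hP : (Yᴴ * Y).PosSemidef := Matrix.posSemidef_conjTranspose_mul_self Y with hPdef
  set V : Matrix (Fin n) (Fin n) ℂ := (hP.1.eigenvectorUnitary : Matrix (Fin n) (Fin n) ℂ)
    with hVdef
  set lam : Fin n → ℝ := hP.1.eigenvalues with hlam
  have hVV : star V * V = 1 := hP.1.eigenvectorUnitary.2.1
  have hVV' : V * star V = 1 := hP.1.eigenvectorUnitary.2.2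
  have hsq : hP.sqrt = V * diagonal (fun i => (Real.sqrt (lam i) : ℂ)) * star V := rfl
  have htrsq : traceNorm Y = ∑ j, Real.sqrt (lam j) := by
    have : hP.sqrt.trace = ∑ j, (Real.sqrt (lam j) : ℂ) := by
      rw [hsq, Matrix.trace_mul_cycle, hVV, Matrix.one_mul, Matrix.trace_diagonal]
    show hP.sqrt.trace.re = _
    rw [this, Complex.re_sum]
    norm_num
  set C : Matrix (Fin n) (Fin n) ℂ := star V * Y * V with hC
  have htrC : C.trace = Y.trace := by
    rw [hC, Matrix.trace_mul_cycle, hVV', Matrix.one_mul]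
  have hCC : star C * C = diagonal (fun j => (lam j : ℂ)) := by
    have h1 : star C = star V * star Y * V := by
      rw [hC, Matrix.star_mul, Matrix.star_mul, star_star, Matrix.mul_assoc]
    rw [h1, hC]
    calc star V * star Y * V * (star V * Y * V)
        = star V * star Y * (V * star V) * Y * V := by simp only [Matrix.mul_assoc]
      _ = star V * (Yᴴ * Y) * V := by rw [hVV']; simp only [Matrix.mul_one, Matrix.mul_assoc,
            Matrix.star_eq_conjTranspose]
      _ = diagonal (fun j => (lam j : ℂ)) := by
          have hs : Yᴴ * Y = V * diagonal (fun j => (lam j : ℂ)) * star V := hP.1.spectral_theorem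
          rw [hs]
          calc star V * (V * diagonal (fun j => (lam j : ℂ)) * star V) * V
              = (star V * V) * diagonal (fun j => (lam j : ℂ)) * (star V * V) := by
                simp only [Matrix.mul_assoc]
            _ = diagonal (fun j => (lam j : ℂ)) := by rw [hVV, Matrix.one_mul, Matrix.mul_one]
  have hcol : ∀ j, ∑ i, ‖C i j‖ ^ 2 = lam j := by
    intro j
    have h2 : (star C * C) j j = (lam j : ℂ) := by rw [hCC]; simp
    have h3 : (star C * C) j j = ((∑ i, ‖C i j‖ ^ 2 : ℝ) : ℂ) := by
      rw [Matrix.mul_apply]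
      push_cast
      apply Finset.sum_congr rfl
      intro i _
      rw [Matrix.star_apply, Complex.star_def]
      rw [mul_comm, Complex.mul_conj']
    rw [h3] at h2
    exact_mod_cast h2
  have hdiag : ∀ j, ‖C j j‖ ≤ Real.sqrt (lam j) := by
    intro j
    rw [Real.le_sqrt (norm_nonneg _) (hP.eigenvalues_nonneg j)]
    show _ ≤ lam j
    rw [← hcol j]
    exact Finset.single_le_sum (f := fun i => ‖C i j‖ ^ 2)
      (fun i _ => by positivity) (Finset.mem_univ j)
  calc Y.trace.re = C.trace.re := by rw [htrC]
    _ = ∑ j, (C j j).re := by rw [Matrix.trace, Complex.re_sum]; rfl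
    _ ≤ ∑ j, ‖C j j‖ := Finset.sum_le_sum (fun j _ => Complex.re_le_norm _)
    _ ≤ ∑ j, Real.sqrt (lam j) := Finset.sum_le_sum (fun j _ => hdiag j)
    _ = traceNorm Y := (htrsq).symm

lemma matFun_eq {n : ℕ} (f : ℝ → ℝ) {A : Matrix (Fin n) (Fin n) ℂ} (hA : A.IsHermitian) :
    matFun f A = (hA.eigenvectorUnitary : Matrix (Fin n) (Fin n) ℂ) *
      diagonal (fun i => (f (hA.eigenvalues i) : ℂ)) *
      (star (hA.eigenvectorUnitary : Matrix (Fin n) (Fin n) ℂ)) := dif_pos hA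

lemma trace_mul_matFun {n : ℕ} {A B : Matrix (Fin n) (Fin n) ℂ} (hA : A.IsHermitian)
    (hB : B.IsHermitian) (f : ℝ → ℝ) :
    (A * matFun f B).trace =
      ((∑ i, ∑ j, hA.eigenvalues i * f (hB.eigenvalues j) *
        ‖(star (hA.eigenvectorUnitary : Matrix (Fin n) (Fin n) ℂ) *
          (hB.eigenvectorUnitary : Matrix (Fin n) (Fin n) ℂ)) i j‖ ^ 2 : ℝ) : ℂ) := by
  have h1 : A = (hA.eigenvectorUnitary : Matrix (Fin n) (Fin n) ℂ) *
      diagonal (fun i => (hA.eigenvalues i : ℂ)) *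
      star (hA.eigenvectorUnitary : Matrix (Fin n) (Fin n) ℂ) := hA.spectral_theorem
  conv_lhs => rw [h1, matFun_eq f hB]
  exact trace_core _ _ _ _

lemma trace_sqrt_mul_sqrt {n : ℕ} {A B : Matrix (Fin n) (Fin n) ℂ} (hA : A.PosSemidef)
    (hB : B.PosSemidef) :
    (hA.sqrt * hB.sqrt).trace =
      ((∑ i, ∑ j, Real.sqrt (hA.1.eigenvalues i) * Real.sqrt (hB.1.eigenvalues j) *
        ‖(star (hA.1.eigenvectorUnitary : Matrix (Fin n) (Fin n) ℂ) *
          (hB.1.eigenvectorUnitary : Matrix (Fin n) (Fin n) ℂ)) i j‖ ^ 2 : ℝ) : ℂ) := by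
  have e1 : hA.sqrt = (hA.1.eigenvectorUnitary : Matrix (Fin n) (Fin n) ℂ) *
      diagonal (fun i => (Real.sqrt (hA.1.eigenvalues i) : ℂ)) *
      star (hA.1.eigenvectorUnitary : Matrix (Fin n) (Fin n) ℂ) := rfl
  have e2 : hB.sqrt = (hB.1.eigenvectorUnitary : Matrix (Fin n) (Fin n) ℂ) *
      diagonal (fun i => (Real.sqrt (hB.1.eigenvalues i) : ℂ)) *
      star (hB.1.eigenvectorUnitary : Matrix (Fin n) (Fin n) ℂ) := rfl
  rw [e1, e2]
  exact trace_core _ _ _ _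

lemma sum_normsq_col {n : ℕ} {W : Matrix (Fin n) (Fin n) ℂ} (h : star W * W = 1) (j : Fin n) :
    ∑ i, ‖W i j‖ ^ 2 = 1 := by
  have h2 : (star W * W) j j = ((∑ i, ‖W i j‖ ^ 2 : ℝ) : ℂ) := by
    rw [Matrix.mul_apply]
    push_cast
    apply Finset.sum_congr rfl
    intro i _
    rw [Matrix.star_apply, Complex.star_def, mul_comm, Complex.mul_conj']
  have h3 : ((∑ i, ‖W i j‖ ^ 2 : ℝ) : ℂ) = 1 := by rw [← h2, h, Matrix.one_apply_eq]
  exact_mod_cast h3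

lemma sum_normsq_row {n : ℕ} {W : Matrix (Fin n) (Fin n) ℂ} (h : W * star W = 1) (i : Fin n) :
    ∑ j, ‖W i j‖ ^ 2 = 1 := by
  have h2 : (W * star W) i i = ((∑ j, ‖W i j‖ ^ 2 : ℝ) : ℂ) := by
    rw [Matrix.mul_apply]
    push_cast
    apply Finset.sum_congr rfl
    intro j _
    rw [Matrix.star_apply, Complex.star_def, Complex.mul_conj']
  have h3 : ((∑ j, ‖W i j‖ ^ 2 : ℝ) : ℂ) = 1 := by rw [← h2, h, Matrix.one_apply_eq]
  exact_mod_cast h3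

lemma pointwise_bound {p q c : ℝ} (hp : 0 ≤ p) (hq : 0 ≤ q) (hc : 0 ≤ c)
    (hz : q = 0 → p * c = 0) :
    (2 / Real.log 2) * ((p - Real.sqrt p * Real.sqrt q) * c)
      ≤ (p * Real.logb 2 p - p * Real.logb 2 q) * c := by
  have hlog2 : 0 < Real.log 2 := Real.log_pos (by norm_num)
  rcases eq_or_lt_of_le hc with h | hc'
  · simp [← h]
  rcases eq_or_lt_of_le hp with h | hp'
  · simp [← h]
  have hq' : 0 < q := by
    rcases eq_or_lt_of_le hq with h | h
    · exfalso; have := hz h.symm; nlinarith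
    · exact h
  have hsp : 0 < Real.sqrt p := Real.sqrt_pos.mpr hp'
  have hsq : 0 < Real.sqrt q := Real.sqrt_pos.mpr hq'
  have h3 : Real.sqrt p * Real.sqrt p = p := Real.mul_self_sqrt hp
  have key : 2 * (p - Real.sqrt p * Real.sqrt q) ≤ p * (Real.log p - Real.log q) := by
    have h1 : Real.log (Real.sqrt q / Real.sqrt p) ≤ Real.sqrt q / Real.sqrt p - 1 :=
      Real.log_le_sub_one_of_pos (by positivity)
    have h2 : Real.log (Real.sqrt q / Real.sqrt p) = Real.log q / 2 - Real.log p / 2 := by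
      rw [Real.log_div (by positivity) (by positivity), Real.log_sqrt hq, Real.log_sqrt hp]
    rw [h2] at h1
    have h4 : p * (Real.sqrt q / Real.sqrt p) = Real.sqrt p * Real.sqrt q := by
      field_simp
      nlinarith
    have h5 := mul_le_mul_of_nonneg_left h1 hp
    nlinarith
  calc (2 / Real.log 2) * ((p - Real.sqrt p * Real.sqrt q) * c)
      = (2 * (p - Real.sqrt p * Real.sqrt q)) * c / Real.log 2 := by ring
    _ ≤ (p * (Real.log p - Real.log q)) * c / Real.log 2 :=
        (div_le_div_iff_of_pos_right hlog2).mpr (mul_le_mul_of_nonneg_right key hc)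
    _ = (p * Real.logb 2 p - p * Real.logb 2 q) * c := by
        rw [Real.logb, Real.logb]; ring

lemma final_real {n : ℕ} (p q : Fin n → ℝ) (c : Fin n → Fin n → ℝ) (F : ℝ)
    (hp0 : ∀ i, 0 ≤ p i) (hq0 : ∀ j, 0 ≤ q j) (hc0 : ∀ i j, 0 ≤ c i j)
    (hrow : ∀ i, ∑ j, c i j = 1) (hcol : ∀ j, ∑ i, c i j = 1)
    (hpsum : ∑ i, p i = 1) (hqsum : ∑ j, q j = 1)
    (hz : ∀ i j, q j = 0 → p i * c i j = 0)
    (hBF : ∑ i, ∑ j, Real.sqrt (p i) * Real.sqrt (q j) * c i j ≤ F) :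
    1 - F ^ 2 ≤ (∑ i, p i * Real.logb 2 (p i)) - ∑ i, ∑ j, p i * Real.logb 2 (q j) * c i j := by
  set B : ℝ := ∑ i, ∑ j, Real.sqrt (p i) * Real.sqrt (q j) * c i j with hBdef
  have hB0 : 0 ≤ B := Finset.sum_nonneg fun i _ => Finset.sum_nonneg fun j _ =>
    mul_nonneg (mul_nonneg (Real.sqrt_nonneg _) (Real.sqrt_nonneg _)) (hc0 i j)
  have hB1 : B ≤ 1 := by
    have step : B ≤ ∑ i, ∑ j, ((p i + q j) / 2) * c i j := by
      rw [hBdef]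
      apply Finset.sum_le_sum
      intro i _
      apply Finset.sum_le_sum
      intro j _
      apply mul_le_mul_of_nonneg_right _ (hc0 i j)
      nlinarith [Real.sq_sqrt (hp0 i), Real.sq_sqrt (hq0 j),
        sq_nonneg (Real.sqrt (p i) - Real.sqrt (q j))]
    have e1 : ∀ i j, ((p i + q j) / 2) * c i j = (p i * c i j) / 2 + (q j * c i j) / 2 := by
      intro i j; ring
    have f1 : ∑ i, ∑ j, (p i * c i j) / 2 = 1 / 2 := by
      have h : ∀ i, ∑ j, (p i * c i j) / 2 = p i / 2 := by
        intro i
        rw [← Finset.sum_div, ← Finset.mul_sum, hrow i, mul_one]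
      simp_rw [h]
      rw [← Finset.sum_div, hpsum]
    have f2 : ∑ i, ∑ j, (q j * c i j) / 2 = 1 / 2 := by
      rw [Finset.sum_comm]
      have h : ∀ j, ∑ i, (q j * c i j) / 2 = q j / 2 := by
        intro j
        rw [← Finset.sum_div, ← Finset.mul_sum, hcol j, mul_one]
      simp_rw [h]
      rw [← Finset.sum_div, hqsum]
    calc B ≤ ∑ i, ∑ j, ((p i + q j) / 2) * c i j := step
      _ = (∑ i, ∑ j, (p i * c i j) / 2) + ∑ i, ∑ j, (q j * c i j) / 2 := by
          simp_rw [e1, Finset.sum_add_distrib]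
      _ = 1 := by rw [f1, f2]; norm_num
  have hone : (1 : ℝ) = ∑ i, ∑ j, p i * c i j := by
    symm
    have h : ∀ i, ∑ j, p i * c i j = p i := by
      intro i
      rw [← Finset.mul_sum, hrow i, mul_one]
    simp_rw [h]
    exact hpsum
  have hS1 : (∑ i, p i * Real.logb 2 (p i)) = ∑ i, ∑ j, (p i * Real.logb 2 (p i)) * c i j := by
    apply Finset.sum_congr rfl
    intro i _
    rw [← Finset.mul_sum, hrow i, mul_one]
  have hL : 0 < Real.log 2 := Real.log_pos (by norm_num)
  have hL1 : Real.log 2 < 1 := by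
    have := Real.log_two_lt_d9; linarith
  have h2L : (2 : ℝ) ≤ 2 / Real.log 2 := by
    rw [le_div_iff₀ hL]; nlinarith
  have hkey : (2 / Real.log 2) * (1 - B)
      ≤ (∑ i, p i * Real.logb 2 (p i)) - ∑ i, ∑ j, p i * Real.logb 2 (q j) * c i j := by
    rw [hS1, hBdef]
    nth_rewrite 1 [hone]
    simp_rw [← Finset.sum_sub_distrib, Finset.mul_sum]
    apply Finset.sum_le_sum
    intro i _
    apply Finset.sum_le_sum
    intro j _
    have hpb := pointwise_bound (hp0 i) (hq0 j) (hc0 i j) (hz i j)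
    linarith [hpb]
  have hBn : (0 : ℝ) ≤ 1 - B := by linarith
  have hmul := mul_le_mul_of_nonneg_right h2L hBn
  nlinarith [hkey, hBF, hB0, hB1, hmul, sq_nonneg (1 - B), sq_nonneg (F - B)]

/-- For density operators `ρ, σ` with `supp(ρ) ⊆ supp(σ)`, the quantum relative
entropy `D(ρ‖σ) = tr(ρ(log₂ρ − log₂σ))` dominates the squared purified distance:
`D(ρ‖σ) ≥ P(ρ,σ)² = 1 − F(ρ,σ)²`. -/
theorem qRelEnt_ge_one_sub_fidelity_sq {n : ℕ} (ρ σ : Matrix (Fin n) (Fin n) ℂ)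
    (hρ : ρ.PosSemidef) (hρ1 : ρ.trace = 1)
    (hσ : σ.PosSemidef) (hσ1 : σ.trace = 1)
    (hsupp : ∀ v : Fin n → ℂ, σ *ᵥ v = 0 → ρ *ᵥ v = 0) :
    1 - (fidelity hρ hσ) ^ 2 ≤ (ρ * (matLog ρ - matLog σ)).trace.re := by
  classical
  have hUU : star (hρ.1.eigenvectorUnitary : Matrix (Fin n) (Fin n) ℂ) *
      (hρ.1.eigenvectorUnitary : Matrix (Fin n) (Fin n) ℂ) = 1 := hρ.1.eigenvectorUnitary.2.1
  have hUU' : (hρ.1.eigenvectorUnitary : Matrix (Fin n) (Fin n) ℂ) *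
      star (hρ.1.eigenvectorUnitary : Matrix (Fin n) (Fin n) ℂ) = 1 := hρ.1.eigenvectorUnitary.2.2
  have hVV : star (hσ.1.eigenvectorUnitary : Matrix (Fin n) (Fin n) ℂ) *
      (hσ.1.eigenvectorUnitary : Matrix (Fin n) (Fin n) ℂ) = 1 := hσ.1.eigenvectorUnitary.2.1
  have hVV' : (hσ.1.eigenvectorUnitary : Matrix (Fin n) (Fin n) ℂ) *
      star (hσ.1.eigenvectorUnitary : Matrix (Fin n) (Fin n) ℂ) = 1 := hσ.1.eigenvectorUnitary.2.2
  -- abbreviations (purely notational, everything is stated with full terms)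
  have hρspec : ρ = (hρ.1.eigenvectorUnitary : Matrix (Fin n) (Fin n) ℂ) *
      diagonal (fun i => (hρ.1.eigenvalues i : ℂ)) *
      star (hρ.1.eigenvectorUnitary : Matrix (Fin n) (Fin n) ℂ) := hρ.1.spectral_theorem
  -- the overlap matrix
  have hWrow : (star (hρ.1.eigenvectorUnitary : Matrix (Fin n) (Fin n) ℂ) *
      (hσ.1.eigenvectorUnitary : Matrix (Fin n) (Fin n) ℂ)) *
      star (star (hρ.1.eigenvectorUnitary : Matrix (Fin n) (Fin n) ℂ) *
      (hσ.1.eigenvectorUnitary : Matrix (Fin n) (Fin n) ℂ)) = 1 := by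
    rw [Matrix.star_mul, star_star]
    calc star (hρ.1.eigenvectorUnitary : Matrix (Fin n) (Fin n) ℂ) *
          (hσ.1.eigenvectorUnitary : Matrix (Fin n) (Fin n) ℂ) *
          (star (hσ.1.eigenvectorUnitary : Matrix (Fin n) (Fin n) ℂ) *
          (hρ.1.eigenvectorUnitary : Matrix (Fin n) (Fin n) ℂ))
        = star (hρ.1.eigenvectorUnitary : Matrix (Fin n) (Fin n) ℂ) *
          (((hσ.1.eigenvectorUnitary : Matrix (Fin n) (Fin n) ℂ) *
          star (hσ.1.eigenvectorUnitary : Matrix (Fin n) (Fin n) ℂ)) *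
          (hρ.1.eigenvectorUnitary : Matrix (Fin n) (Fin n) ℂ)) := by
          simp only [Matrix.mul_assoc]
      _ = 1 := by rw [hVV', Matrix.one_mul, hUU]
  have hWcol : star (star (hρ.1.eigenvectorUnitary : Matrix (Fin n) (Fin n) ℂ) *
      (hσ.1.eigenvectorUnitary : Matrix (Fin n) (Fin n) ℂ)) *
      (star (hρ.1.eigenvectorUnitary : Matrix (Fin n) (Fin n) ℂ) *
      (hσ.1.eigenvectorUnitary : Matrix (Fin n) (Fin n) ℂ)) = 1 := by
    rw [Matrix.star_mul, star_star]
    calc star (hσ.1.eigenvectorUnitary : Matrix (Fin n) (Fin n) ℂ) *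
          (hρ.1.eigenvectorUnitary : Matrix (Fin n) (Fin n) ℂ) *
          (star (hρ.1.eigenvectorUnitary : Matrix (Fin n) (Fin n) ℂ) *
          (hσ.1.eigenvectorUnitary : Matrix (Fin n) (Fin n) ℂ))
        = star (hσ.1.eigenvectorUnitary : Matrix (Fin n) (Fin n) ℂ) *
          (((hρ.1.eigenvectorUnitary : Matrix (Fin n) (Fin n) ℂ) *
          star (hρ.1.eigenvectorUnitary : Matrix (Fin n) (Fin n) ℂ)) *
          (hσ.1.eigenvectorUnitary : Matrix (Fin n) (Fin n) ℂ)) := by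
          simp only [Matrix.mul_assoc]
      _ = 1 := by rw [hUU', Matrix.one_mul, hVV]
  -- trace identities
  have t1 : (ρ * matLog ρ).trace =
      ((∑ i, hρ.1.eigenvalues i * Real.logb 2 (hρ.1.eigenvalues i) : ℝ) : ℂ) := by
    rw [matLog, trace_mul_matFun hρ.1 hρ.1, hUU]
    congr 1
    apply Finset.sum_congr rfl
    intro i _
    rw [Finset.sum_eq_single i]
    · simp [Matrix.one_apply_eq]
    · intro j _ hji
      rw [Matrix.one_apply_ne (Ne.symm hji)]
      simp
    · intro h; exact absurd (Finset.mem_univ i) h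
  have t2 : (ρ * matLog σ).trace =
      ((∑ i, ∑ j, hρ.1.eigenvalues i * Real.logb 2 (hσ.1.eigenvalues j) *
        ‖(star (hρ.1.eigenvectorUnitary : Matrix (Fin n) (Fin n) ℂ) *
          (hσ.1.eigenvectorUnitary : Matrix (Fin n) (Fin n) ℂ)) i j‖ ^ 2 : ℝ) : ℂ) := by
    rw [matLog, trace_mul_matFun hρ.1 hσ.1]
  -- eigenvalue facts
  have hp0 : ∀ i, 0 ≤ hρ.1.eigenvalues i := fun i => hρ.eigenvalues_nonneg i
  have hq0 : ∀ j, 0 ≤ hσ.1.eigenvalues j := fun j => hσ.eigenvalues_nonneg j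
  have hpsum : ∑ i, hρ.1.eigenvalues i = 1 := by
    have h : ρ.trace = ((∑ i, hρ.1.eigenvalues i : ℝ) : ℂ) := by
      conv_lhs => rw [hρspec]
      rw [Matrix.trace_mul_cycle, hUU, Matrix.one_mul, Matrix.trace_diagonal]
      push_cast
      rfl
    rw [hρ1] at h
    exact_mod_cast h.symm
  have hqsum : ∑ j, hσ.1.eigenvalues j = 1 := by
    have hσspec : σ = (hσ.1.eigenvectorUnitary : Matrix (Fin n) (Fin n) ℂ) *
        diagonal (fun i => (hσ.1.eigenvalues i : ℂ)) *
        star (hσ.1.eigenvectorUnitary : Matrix (Fin n) (Fin n) ℂ) := hσ.1.spectral_theorem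
    have h : σ.trace = ((∑ i, hσ.1.eigenvalues i : ℝ) : ℂ) := by
      conv_lhs => rw [hσspec]
      rw [Matrix.trace_mul_cycle, hVV, Matrix.one_mul, Matrix.trace_diagonal]
      push_cast
      rfl
    rw [hσ1] at h
    exact_mod_cast h.symm
  -- support condition
  have hz : ∀ i j, hσ.1.eigenvalues j = 0 →
      hρ.1.eigenvalues i * ‖(star (hρ.1.eigenvectorUnitary : Matrix (Fin n) (Fin n) ℂ) *
        (hσ.1.eigenvectorUnitary : Matrix (Fin n) (Fin n) ℂ)) i j‖ ^ 2 = 0 := by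
    intro i j hqj
    have hb : σ *ᵥ ⇑(hσ.1.eigenvectorBasis j) = 0 := by
      rw [hσ.1.mulVec_eigenvectorBasis, hqj, zero_smul]
    have hrb : ρ *ᵥ ⇑(hσ.1.eigenvectorBasis j) = 0 := hsupp _ hb
    have h0 := congrArg (fun M : Matrix (Fin n) (Fin n) ℂ =>
        star (hρ.1.eigenvectorUnitary : Matrix (Fin n) (Fin n) ℂ) * M *
        (hσ.1.eigenvectorUnitary : Matrix (Fin n) (Fin n) ℂ)) hρspec
    have e1 : diagonal (fun i => (hρ.1.eigenvalues i : ℂ)) *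
        (star (hρ.1.eigenvectorUnitary : Matrix (Fin n) (Fin n) ℂ) *
          (hσ.1.eigenvectorUnitary : Matrix (Fin n) (Fin n) ℂ))
        = star (hρ.1.eigenvectorUnitary : Matrix (Fin n) (Fin n) ℂ) * ρ *
          (hσ.1.eigenvectorUnitary : Matrix (Fin n) (Fin n) ℂ) := by
      rw [h0]
      symm
      calc star (hρ.1.eigenvectorUnitary : Matrix (Fin n) (Fin n) ℂ) *
            ((hρ.1.eigenvectorUnitary : Matrix (Fin n) (Fin n) ℂ) *
              diagonal (fun i => (hρ.1.eigenvalues i : ℂ)) *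
              star (hρ.1.eigenvectorUnitary : Matrix (Fin n) (Fin n) ℂ)) *
            (hσ.1.eigenvectorUnitary : Matrix (Fin n) (Fin n) ℂ)
          = (star (hρ.1.eigenvectorUnitary : Matrix (Fin n) (Fin n) ℂ) *
            (hρ.1.eigenvectorUnitary : Matrix (Fin n) (Fin n) ℂ)) *
            (diagonal (fun i => (hρ.1.eigenvalues i : ℂ)) *
            (star (hρ.1.eigenvectorUnitary : Matrix (Fin n) (Fin n) ℂ) *
              (hσ.1.eigenvectorUnitary : Matrix (Fin n) (Fin n) ℂ))) := by
            simp only [Matrix.mul_assoc]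
        _ = diagonal (fun i => (hρ.1.eigenvalues i : ℂ)) *
            (star (hρ.1.eigenvectorUnitary : Matrix (Fin n) (Fin n) ℂ) *
              (hσ.1.eigenvectorUnitary : Matrix (Fin n) (Fin n) ℂ)) := by
            rw [hUU, Matrix.one_mul]
    have e2 : (star (hρ.1.eigenvectorUnitary : Matrix (Fin n) (Fin n) ℂ) * ρ *
        (hσ.1.eigenvectorUnitary : Matrix (Fin n) (Fin n) ℂ)) *ᵥ Pi.single j 1 = 0 := by
      have e3 : (star (hρ.1.eigenvectorUnitary : Matrix (Fin n) (Fin n) ℂ) * ρ *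
          (hσ.1.eigenvectorUnitary : Matrix (Fin n) (Fin n) ℂ)) *ᵥ Pi.single j 1
          = star (hρ.1.eigenvectorUnitary : Matrix (Fin n) (Fin n) ℂ) *ᵥ
            (ρ *ᵥ ((hσ.1.eigenvectorUnitary : Matrix (Fin n) (Fin n) ℂ) *ᵥ Pi.single j 1)) := by
        rw [Matrix.mulVec_mulVec, Matrix.mulVec_mulVec]
      rw [e3, hσ.1.eigenvectorUnitary_mulVec, hrb, Matrix.mulVec_zero]
    rw [← e1] at e2
    have e5 : ((diagonal (fun i => (hρ.1.eigenvalues i : ℂ)) *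
        (star (hρ.1.eigenvectorUnitary : Matrix (Fin n) (Fin n) ℂ) *
          (hσ.1.eigenvectorUnitary : Matrix (Fin n) (Fin n) ℂ))) *ᵥ Pi.single j 1) i
        = (hρ.1.eigenvalues i : ℂ) *
          (star (hρ.1.eigenvectorUnitary : Matrix (Fin n) (Fin n) ℂ) *
            (hσ.1.eigenvectorUnitary : Matrix (Fin n) (Fin n) ℂ)) i j := by
      simp [Matrix.mulVec_single, Matrix.diagonal_mul]
    rw [e2] at e5
    rcases mul_eq_zero.mp e5.symm with h | h
    · have hpi : hρ.1.eigenvalues i = 0 := by exact_mod_cast h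
      rw [hpi, zero_mul]
    · rw [h]
      simp
  -- fidelity bound
  have t3 := trace_sqrt_mul_sqrt hρ hσ
  have hBF : ∑ i, ∑ j, Real.sqrt (hρ.1.eigenvalues i) * Real.sqrt (hσ.1.eigenvalues j) *
      ‖(star (hρ.1.eigenvectorUnitary : Matrix (Fin n) (Fin n) ℂ) *
        (hσ.1.eigenvectorUnitary : Matrix (Fin n) (Fin n) ℂ)) i j‖ ^ 2 ≤ fidelity hρ hσ := by
    have h := re_trace_le_traceNorm (hρ.sqrt * hσ.sqrt)
    rw [t3, Complex.ofReal_re] at h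
    exact h
  -- put everything together
  have goalrw : (ρ * (matLog ρ - matLog σ)).trace.re =
      (∑ i, hρ.1.eigenvalues i * Real.logb 2 (hρ.1.eigenvalues i)) -
      ∑ i, ∑ j, hρ.1.eigenvalues i * Real.logb 2 (hσ.1.eigenvalues j) *
        ‖(star (hρ.1.eigenvectorUnitary : Matrix (Fin n) (Fin n) ℂ) *
          (hσ.1.eigenvectorUnitary : Matrix (Fin n) (Fin n) ℂ)) i j‖ ^ 2 := by
    rw [Matrix.mul_sub, Matrix.trace_sub, t1, t2, Complex.sub_re, Complex.ofReal_re,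
      Complex.ofReal_re]
  rw [goalrw]
  exact final_real (hρ.1.eigenvalues) (hσ.1.eigenvalues)
    (fun i j => ‖(star (hρ.1.eigenvectorUnitary : Matrix (Fin n) (Fin n) ℂ) *
      (hσ.1.eigenvectorUnitary : Matrix (Fin n) (Fin n) ℂ)) i j‖ ^ 2)
    (fidelity hρ hσ) hp0 hq0 (fun i j => by positivity)
    (fun i => sum_normsq_row hWrow i) (fun j => sum_normsq_col hWcol j)
    hpsum hqsum hz hBF
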